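/- Governed interpretation safety: for every base handler h and every program t over directive events, the governed interpretation interp (Gov h) t is safe at permission level false, i.e., gov_safe false (interp (Gov h) t). -/

import Mathlib

/-- The polynomial functor whose M-type is the type of interaction trees
over events `E` with answer types `Ans` and return type `R`. -/
def itreeP (E : Type) (Ans : E → Type) (R : Type) : PFunctor where
  A := R ⊕ Unit ⊕ E
  B := fun a =>
    match a with
    | .inl _ => Empty
    | .inr (.inl _) => PUnit
    | .inr (.inr e) => Ans e

/-- Coinductive interaction trees, as the final coalgebra (M-type) of `itreeP`. -/
def ITree (E : Type) (Ans : E → Type) (R : Type) : Type := (itreeP E Ans R).M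

namespace ITree

variable {E : Type} {Ans : E → Type} {R : Type}

def Ret (v : R) : ITree E Ans R := PFunctor.M.mk ⟨Sum.inl v, Empty.elim⟩

def Tau (t : ITree E Ans R) : ITree E Ans R :=
  PFunctor.M.mk ⟨Sum.inr (Sum.inl ()), fun _ => t⟩

def Vis (e : E) (k : Ans e → ITree E Ans R) : ITree E Ans R :=
  PFunctor.M.mk ⟨Sum.inr (Sum.inr e), k⟩

/-- Silent divergence: `spin = Tau spin`. -/
def spin : ITree E Ans R :=
  PFunctor.M.corec (fun _ : Unit => ⟨Sum.inr (Sum.inl ()), fun _ => ()⟩) ()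

end ITree

/-- Monadic bind on interaction trees, defined by corecursion:
`bind (Ret v) k = k v`, `bind (Tau t) k = Tau (bind t k)`,
`bind (Vis e h) k = Vis e (fun x => bind (h x) k)`. -/
def ITree.bind {E : Type} {Ans : E → Type} {R S : Type}
    (t : ITree E Ans R) (k : R → ITree E Ans S) : ITree E Ans S :=
  PFunctor.M.corec
    (fun st : ITree E Ans R ⊕ ITree E Ans S =>
      match st with
      | .inl t =>
        match PFunctor.M.dest t with
        | ⟨Sum.inl v, _⟩ =>
          let d := PFunctor.M.dest (k v)
          ⟨d.1, fun x => Sum.inr (d.2 x)⟩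
        | ⟨Sum.inr (Sum.inl _), c⟩ =>
          ⟨Sum.inr (Sum.inl ()), fun _ => Sum.inl (c PUnit.unit)⟩
        | ⟨Sum.inr (Sum.inr e), c⟩ =>
          ⟨Sum.inr (Sum.inr e), fun x => Sum.inl (c x)⟩
      | .inr u =>
        let d := PFunctor.M.dest u
        ⟨d.1, fun x => Sum.inr (d.2 x)⟩)
    (Sum.inl t)

inductive DirectiveE : Type
  | MemoryOp (params : Nat) | DBOp (params : Nat) | FileOp (params : Nat)
  | LLMCall (params : Nat) | LLMCallStream (params : Nat)
  | CallMachine (params : Nat) | HTTPRequest (params : Nat) | ExecOp (params : Nat)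
  | GraphQLRequest (params : Nat) | WebSocketOp (params : Nat) | MCPCall (params : Nat)
  | ObserveOp (params : Nat)

def is_memory_event : DirectiveE → Bool
  | .MemoryOp _ | .DBOp _ | .FileOp _ => true
  | _ => false

def is_reason_event : DirectiveE → Bool
  | .LLMCall _ | .LLMCallStream _ => true
  | _ => false

def is_call_event : DirectiveE → Bool
  | .CallMachine _ | .HTTPRequest _ | .ExecOp _
  | .GraphQLRequest _ | .WebSocketOp _ | .MCPCall _ => true
  | _ => false

def is_observe_event : DirectiveE → Bool
  | .ObserveOp _ => true
  | _ => false

/-- Every directive is answered by a natural number. -/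
def DAns : DirectiveE → Type := fun _ => Nat

/-- Governance-only events: the pre-check and post-instrumentation stages. -/
inductive GovStage : Type
  | trustCheck | permissionCheck | phaseValidation | preHooks
  | guardrails | provenanceRecord | eventBroadcast
section GovSafe

-- Governance-only events (each answered by a `Bool`) and I/O events.
variable {IOE : Type} {IOAns : IOE → Type} {R : Type}

/-- Answer types for the combined event type `GovIOE = GovStage ⊕ IOE`. -/
def GovIOAns (IOAns : IOE → Type) : GovStage ⊕ IOE → Type
  | .inl _ => Bool
  | .inr e => IOAns e

/-- One step of the coinductive safety predicate `gov_safe`: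
returns are safe; `Tau` preserves the level; governance events are safe at any
level and raise the level to `true`; bare I/O events require level `true`. -/
def gov_safeF
    (F : Bool → ITree (GovStage ⊕ IOE) (GovIOAns IOAns) R → Prop)
    (allowed : Bool) (t : ITree (GovStage ⊕ IOE) (GovIOAns IOAns) R) : Prop :=
  (∃ v : R, t = ITree.Ret v) ∨
  (∃ t', t = ITree.Tau t' ∧ F allowed t') ∨
  (∃ (g : GovStage) (k : Bool → ITree (GovStage ⊕ IOE) (GovIOAns IOAns) R),
      t = ITree.Vis (Sum.inl g) k ∧ ∀ b : Bool, F true (k b)) ∨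
  (∃ (e : IOE) (k : IOAns e → ITree (GovStage ⊕ IOE) (GovIOAns IOAns) R),
      t = ITree.Vis (Sum.inr e) k ∧ allowed = true ∧ ∀ x, F true (k x))

/-- `gov_safe` is the greatest fixed point of `gov_safeF`. -/
def gov_safe (allowed : Bool)
    (t : ITree (GovStage ⊕ IOE) (GovIOAns IOAns) R) : Prop :=
  ∃ F, F allowed t ∧ ∀ a u, F a u → gov_safeF F a u

end GovSafe

section Governance

variable {IOE : Type} {IOAns : IOE → Type}

/-- Lift an I/O computation into the combined event type, injecting I/O events
via `Sum.inr`. -/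
def liftIO {R : Type} (t : ITree IOE IOAns R) :
    ITree (GovStage ⊕ IOE) (GovIOAns IOAns) R :=
  PFunctor.M.corec
    (fun u : ITree IOE IOAns R =>
      match PFunctor.M.dest u with
      | ⟨Sum.inl v, _⟩ => ⟨Sum.inl v, Empty.elim⟩
      | ⟨Sum.inr (Sum.inl _), c⟩ =>
        ⟨Sum.inr (Sum.inl ()), fun _ => c PUnit.unit⟩
      | ⟨Sum.inr (Sum.inr e), c⟩ =>
        ⟨Sum.inr (Sum.inr (Sum.inr e)), fun x => c x⟩)
    t

/-- A pre-governance check: emit a governance event, continue on `true`,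
deny by divergence on `false`. -/
def govCheck {R : Type} (g : GovStage)
    (next : ITree (GovStage ⊕ IOE) (GovIOAns IOAns) R) :
    ITree (GovStage ⊕ IOE) (GovIOAns IOAns) R :=
  ITree.Vis (Sum.inl g) (fun b : Bool => if b then next else ITree.spin)

/-- Post-governance instrumentation: emit a governance event and continue. -/
def govPost {R : Type} (g : GovStage)
    (next : ITree (GovStage ⊕ IOE) (GovIOAns IOAns) R) :
    ITree (GovStage ⊕ IOE) (GovIOAns IOAns) R :=
  ITree.Vis (Sum.inl g) (fun _ : Bool => next)

/-- A base handler interprets each directive as an I/O computation. -/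
def BaseHandler (IOE : Type) (IOAns : IOE → Type) : Type :=
  (d : DirectiveE) → ITree IOE IOAns (DAns d)

/-- The governance operator `𝒢`: pre-checks (short-circuiting to `spin` on
failure), then the lifted base handler, then post-instrumentation. -/
def Gov (h : BaseHandler IOE IOAns) (d : DirectiveE) :
    ITree (GovStage ⊕ IOE) (GovIOAns IOAns) (DAns d) :=
  govCheck .trustCheck (govCheck .permissionCheck (govCheck .phaseValidation
    (govCheck .preHooks
      (ITree.bind (liftIO (h d)) (fun r =>
        govPost .guardrails (govPost .provenanceRecord (govPost .eventBroadcast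
          (ITree.Ret r))))))))

/-- The interaction-tree interpreter: each directive `Vis d k` is replaced by
`bind (Gov h d) k`, defined corecursively (with administrative `Tau` steps). -/
def interpGov {R : Type} (h : BaseHandler IOE IOAns)
    (t : ITree DirectiveE DAns R) :
    ITree (GovStage ⊕ IOE) (GovIOAns IOAns) R :=
  PFunctor.M.corec
    (fun st : ITree DirectiveE DAns R ⊕
        (ITree (GovStage ⊕ IOE) (GovIOAns IOAns) Nat ×
          (Nat → ITree DirectiveE DAns R)) =>
      match st with
      | .inl t =>
        match PFunctor.M.dest t with
        | ⟨Sum.inl v, _⟩ => ⟨Sum.inl v, Empty.elim⟩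
        | ⟨Sum.inr (Sum.inl _), c⟩ =>
          ⟨Sum.inr (Sum.inl ()), fun _ => Sum.inl (c PUnit.unit)⟩
        | ⟨Sum.inr (Sum.inr d), c⟩ =>
          ⟨Sum.inr (Sum.inl ()), fun _ => Sum.inr (Gov h d, fun x => c x)⟩
      | .inr (u, κ) =>
        match PFunctor.M.dest u with
        | ⟨Sum.inl x, _⟩ =>
          ⟨Sum.inr (Sum.inl ()), fun _ => Sum.inl (κ x)⟩
        | ⟨Sum.inr (Sum.inl _), c⟩ =>
          ⟨Sum.inr (Sum.inl ()), fun _ => Sum.inr (c PUnit.unit, κ)⟩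
        | ⟨Sum.inr (Sum.inr e), c⟩ =>
          ⟨Sum.inr (Sum.inr e), fun y => Sum.inr (c y, κ)⟩)
    (Sum.inl t)

end Governance

/-!
Safety at level `true` is trivial: no rule ever lowers the level, so every tree qualifies.
At level `false` the interpreter emits only `Ret` and administrative `Tau` steps until it
reaches a directive `d`, and the first event of `Gov h d` is the governance check
`trustCheck`, which raises the level for good.
-/

namespace ITree

variable {E : Type} {Ans : E → Type} {R : Type}

theorem ret_or_tau_or_vis (t : ITree E Ans R) :
    (∃ v, t = Ret v) ∨ (∃ t', t = Tau t') ∨ ∃ e k, t = Vis e k := by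
  rw [← PFunctor.M.mk_dest t]
  rcases PFunctor.M.dest t with ⟨v | ⟨⟩ | e, k⟩
  · exact .inl ⟨v, congrArg (fun c => PFunctor.M.mk ⟨_, c⟩) (funext fun x => x.elim)⟩
  · exact .inr (.inl ⟨k PUnit.unit, rfl⟩)
  · exact .inr (.inr ⟨e, k, rfl⟩)

end ITree

section Safety

variable {IOE : Type} {IOAns : IOE → Type} {R : Type}

local notation "GTree" => ITree (GovStage ⊕ IOE) (GovIOAns IOAns) R

theorem gov_safeF_mono {F G : Bool → GTree → Prop} (hFG : ∀ a u, F a u → G a u)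
    {a : Bool} {t : GTree} (ht : gov_safeF F a t) : gov_safeF G a t := by
  rcases ht with h | ⟨t', rfl, h⟩ | ⟨g, k, rfl, h⟩ | ⟨e, k, rfl, ha, h⟩
  · exact .inl h
  · exact .inr (.inl ⟨t', rfl, hFG _ _ h⟩)
  · exact .inr (.inr (.inl ⟨g, k, rfl, fun b => hFG _ _ (h b)⟩))
  · exact .inr (.inr (.inr ⟨e, k, rfl, ha, fun x => hFG _ _ (h x)⟩))

theorem gov_safeF_gov_safe {a : Bool} {t : GTree} (ht : gov_safe a t) :
    gov_safeF gov_safe a t := by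
  obtain ⟨F, hF, hpost⟩ := ht
  exact gov_safeF_mono (fun _ _ hu => ⟨F, hu, hpost⟩) (hpost a t hF)

theorem gov_safe_coinduct (P : Bool → GTree → Prop)
    (hP : ∀ a u, P a u → gov_safeF (fun b v => P b v ∨ gov_safe b v) a u)
    {a : Bool} {t : GTree} (ht : P a t) : gov_safe a t := by
  refine ⟨fun b v => P b v ∨ gov_safe b v, .inl ht, ?_⟩
  rintro b v (hv | hv)
  · exact hP b v hv
  · exact gov_safeF_mono (fun _ _ => .inr) (gov_safeF_gov_safe hv)

theorem gov_safe_of_gov_safeF {a : Bool} {t : GTree} (ht : gov_safeF gov_safe a t) :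
    gov_safe a t :=
  gov_safe_coinduct (fun b v => gov_safeF gov_safe b v)
    (fun _ _ => gov_safeF_mono (fun _ _ => .inr)) ht

theorem gov_safe_true (t : GTree) : gov_safe true t := by
  refine ⟨fun a _ => a = true, rfl, ?_⟩
  rintro a u rfl
  rcases ITree.ret_or_tau_or_vis u with h | ⟨t', rfl⟩ | ⟨g | e, k, rfl⟩
  · exact .inl h
  · exact .inr (.inl ⟨t', rfl, rfl⟩)
  · exact .inr (.inr (.inl ⟨g, k, rfl, fun _ => rfl⟩))
  · exact .inr (.inr (.inr ⟨e, k, rfl, rfl, fun _ => rfl⟩))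

theorem gov_safe_vis_inl (a : Bool) (g : GovStage) (k : Bool → GTree) :
    gov_safe a (ITree.Vis (Sum.inl g) k) :=
  gov_safe_of_gov_safeF (.inr (.inr (.inl ⟨g, k, rfl, fun _ => gov_safe_true _⟩)))

end Safety

section Interp

variable {IOE : Type} {IOAns : IOE → Type} {R : Type} (h : BaseHandler IOE IOAns)

theorem interpGov_ret (v : R) : interpGov h (ITree.Ret v) = ITree.Ret v := by
  rw [interpGov, PFunctor.M.corec_def]
  exact congrArg (fun c => PFunctor.M.mk ⟨_, c⟩) (funext fun x => x.elim)

theorem interpGov_tau (t : ITree DirectiveE DAns R) :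
    interpGov h (ITree.Tau t) = ITree.Tau (interpGov h t) := by
  rw [interpGov, PFunctor.M.corec_def]
  rfl

theorem interpGov_vis (d : DirectiveE) (k : DAns d → ITree DirectiveE DAns R) :
    ∃ k', interpGov h (ITree.Vis d k) = ITree.Tau (ITree.Vis (Sum.inl .trustCheck) k') := by
  rw [interpGov, PFunctor.M.corec_def]
  -- the second unfolding reduces by computing the head of `Gov h d`, which is `govCheck .trustCheck`
  exact ⟨_, congrArg ITree.Tau (PFunctor.M.corec_def _ _)⟩

end Interp

/-- **Governed Interpretation Safety**: for every base handler `h` and every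
program `t` over directive events, the governed interpretation is safe at
permission level `false`. -/
theorem governed_interp_safe :
    ∀ (IOE : Type) (IOAns : IOE → Type) (h : BaseHandler IOE IOAns)
      (R : Type) (t : ITree DirectiveE DAns R),
      gov_safe false (interpGov h t) := by
  intro IOE IOAns h R t
  refine gov_safe_coinduct (fun a u => a = false ∧ ∃ t, u = interpGov h t) ?_ ⟨rfl, t, rfl⟩
  rintro a u ⟨rfl, s, rfl⟩
  rcases ITree.ret_or_tau_or_vis s with ⟨v, rfl⟩ | ⟨t', rfl⟩ | ⟨d, k, rfl⟩
  · exact .inl ⟨v, interpGov_ret h v⟩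
  · exact .inr (.inl ⟨_, interpGov_tau h t', .inl ⟨rfl, t', rfl⟩⟩)
  · obtain ⟨k', hk'⟩ := interpGov_vis h d k
    exact .inr (.inl ⟨_, hk', .inr (gov_safe_vis_inl _ _ _)⟩)
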